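/- Let F be a finite field with q elements and T = Tr(F). Then the clique number of the commuting graph Γ(T) is q^2 − q. -/

import Mathlib

open Matrix

/-- The ring of 2×2 upper triangular matrices over `R`. -/
def Tri (R : Type*) [CommRing R] : Subring (Matrix (Fin 2) (Fin 2) R) where
  carrier := {A | A 1 0 = 0}
  mul_mem' := by
    intro a b ha hb
    simp only [Set.mem_setOf_eq] at *
    simp [Matrix.mul_apply, Fin.sum_univ_two, ha, hb]
  one_mem' := by simp [Matrix.one_apply]
  add_mem' := by
    intro a b ha hb
    simp_all [Matrix.add_apply]
  zero_mem' := by simp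
  neg_mem' := by
    intro a ha
    simp_all

/-- The commuting graph of a ring `T`: vertices are the noncentral elements,
two distinct vertices are adjacent iff they commute. -/
def commGraph (T : Type*) [Ring T] : SimpleGraph {x : T // x ∉ Set.center T} where
  Adj a b := a ≠ b ∧ (a : T) * b = b * a
  symm := by
    constructor
    rintro a b ⟨h1, h2⟩
    exact ⟨h1.symm, h2.symm⟩
  loopless := by constructor; rintro a ⟨h, _⟩; exact h rfl

/-! Two upper triangular matrices commute iff their vectors `(a₀₀ - a₁₁, a₀₁)` are proportional,
so the centralizer of a noncentral `v` in `Tri F` is the plane `F + F v`. Every clique through `v`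
therefore lies in `{α + β v | β ≠ 0}`, and that set is itself a clique of `q (q - 1)` noncentral
elements. -/

section ScalarAddSMul

variable {F A : Type*} [Field F] [Ring A] [Algebra F A]

def scalarAddSMul (v : A) (p : F × Fˣ) : A := algebraMap F A p.1 + (p.2 : F) • v

theorem commute_scalarAddSMul (v : A) (p p' : F × Fˣ) :
    Commute (scalarAddSMul v p) (scalarAddSMul v p') :=
  .add_left (.add_right (Algebra.commute_algebraMap_left _ _) (Algebra.commute_algebraMap_left _ _))
    (.add_right (Algebra.commute_algebraMap_right _ _)
      (((Commute.refl v).smul_left _).smul_right _))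

theorem smul_mem_center_iff {v : A} {c : F} (hc : c ≠ 0) :
    c • v ∈ Set.center A ↔ v ∈ Set.center A :=
  (Subalgebra.center F A).toSubmodule.smul_mem_iff hc

theorem scalarAddSMul_mem_center_iff {v : A} (p : F × Fˣ) :
    scalarAddSMul v p ∈ Set.center A ↔ v ∈ Set.center A := by
  change _ ∈ Subalgebra.center F A ↔ _
  exact (add_mem_cancel_left (Subalgebra.algebraMap_mem _ p.1)).trans
    (smul_mem_center_iff p.2.ne_zero)

theorem scalarAddSMul_injective {v : A} (hv : v ∉ Set.center A) :
    Function.Injective (scalarAddSMul (F := F) v) := by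
  rintro ⟨a, u⟩ ⟨b, w⟩ h
  obtain rfl : u = w := by
    by_contra hne
    have hsub : ((u : F) - w) • v = algebraMap F A (b - a) := by
      rw [sub_smul, map_sub, sub_eq_sub_iff_add_eq_add, add_comm]
      exact h
    refine hv ((smul_mem_center_iff (sub_ne_zero.2 (Units.val_injective.ne hne))).1 ?_)
    exact hsub ▸ Set.algebraMap_mem_center _
  have : Nontrivial A := ⟨⟨v, 0, fun h => hv (h ▸ Set.zero_mem_center)⟩⟩
  simpa [scalarAddSMul] using h

end ScalarAddSMul

section CommGraph

variable {F A : Type*} [Field F] [Fintype F] [Ring A] [Algebra F A]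

theorem card_le_of_isClique_commGraph
    (hcent : ∀ v : A, v ∉ Set.center A → Set.centralizer {v} ⊆ Submodule.span F {1, v})
    {s : Finset {x : A // x ∉ Set.center A}} (hs : (commGraph A).IsClique s) :
    s.card ≤ Fintype.card F * (Fintype.card F - 1) := by
  classical
  obtain rfl | ⟨v, hv⟩ := s.eq_empty_or_nonempty
  · simp
  have hsub : s.map (Function.Embedding.subtype _) ⊆
      Finset.univ.image (scalarAddSMul (F := F) v.1) := by
    intro _ hw
    obtain ⟨w, hws, rfl⟩ := Finset.mem_map.1 hw
    have hvw : w.1 ∈ Set.centralizer {v.1} := by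
      rintro _ rfl
      obtain rfl | hne := eq_or_ne v w
      · rfl
      · exact (hs hv hws hne).2
    obtain ⟨a, b, hab⟩ := Submodule.mem_span_pair.1 (hcent v.1 v.2 hvw)
    rw [← Algebra.algebraMap_eq_smul_one] at hab
    have hb : b ≠ 0 := by
      rintro rfl
      exact w.2 (by simpa [← hab] using Set.algebraMap_mem_center (A := A) a)
    exact Finset.mem_image.2 ⟨(a, Units.mk0 b hb), Finset.mem_univ _, hab⟩
  calc s.card = (s.map (Function.Embedding.subtype _)).card := (Finset.card_map _).symm
    _ ≤ (Finset.univ.image (scalarAddSMul (F := F) v.1)).card := Finset.card_le_card hsub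
    _ ≤ Fintype.card (F × Fˣ) := Finset.card_image_le
    _ = Fintype.card F * (Fintype.card F - 1) := by rw [Fintype.card_prod, Fintype.card_units]

theorem exists_isClique_commGraph_card_eq {v : A} (hv : v ∉ Set.center A) :
    ∃ s : Finset {x : A // x ∉ Set.center A},
      (commGraph A).IsClique s ∧ s.card = Fintype.card F * (Fintype.card F - 1) := by
  classical
  let e : F × Fˣ ↪ {x : A // x ∉ Set.center A} :=
    ⟨fun p => ⟨scalarAddSMul v p, (scalarAddSMul_mem_center_iff p).not.2 hv⟩,
      fun p p' h => scalarAddSMul_injective hv (congrArg Subtype.val h)⟩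
  refine ⟨Finset.univ.map e, ?_, by
    rw [Finset.card_map, Finset.card_univ, Fintype.card_prod, Fintype.card_units]⟩
  intro x hx y hy hxy
  obtain ⟨p, -, rfl⟩ := Finset.mem_map.1 hx
  obtain ⟨p', -, rfl⟩ := Finset.mem_map.1 hy
  exact ⟨hxy, (commute_scalarAddSMul v p p').eq⟩

theorem cliqueNum_commGraph_eq_of_centralizer_subset_span [Finite A] {v : A}
    (hv : v ∉ Set.center A)
    (hcent : ∀ v : A, v ∉ Set.center A → Set.centralizer {v} ⊆ Submodule.span F {1, v}) :
    (commGraph A).cliqueNum = Fintype.card F * (Fintype.card F - 1) := by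
  obtain ⟨s, hs⟩ := (commGraph A).exists_isNClique_cliqueNum
  obtain ⟨t, ht, htcard⟩ := exists_isClique_commGraph_card_eq (F := F) hv
  exact le_antisymm (hs.card_eq ▸ card_le_of_isClique_commGraph hcent hs.isClique)
    (htcard ▸ ht.card_le_cliqueNum)

end CommGraph

theorem exists_eq_mul_of_mul_eq_mul {K : Type*} [Field K] {d b d' b' : K}
    (hdb : d ≠ 0 ∨ b ≠ 0) (h : d * b' = d' * b) : ∃ t, d' = t * d ∧ b' = t * b := by
  obtain hd | hb := hdb
  · exact ⟨d' / d, by field_simp, by field_simp; linear_combination h⟩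
  · refine ⟨b' / b, ?_, by field_simp⟩
    field_simp
    linear_combination -h

namespace Tri

variable {F : Type*} [Field F]

instance : Algebra F (Tri F) :=
  ((algebraMap F (Matrix (Fin 2) (Fin 2) F)).codRestrict (Tri F) fun c =>
    show algebraMap F (Matrix (Fin 2) (Fin 2) F) c 1 0 = 0 by simp [algebraMap_matrix_apply])
    |>.toAlgebra' fun c A => Subtype.ext (Algebra.commutes c A.1)

@[simp]
theorem coe_algebraMap (c : F) :
    ((algebraMap F (Tri F) c : Tri F) : Matrix (Fin 2) (Fin 2) F) = diagonal fun _ => c :=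
  algebraMap_eq_diagonal c

@[simp]
theorem coe_smul (c : F) (A : Tri F) :
    ((c • A : Tri F) : Matrix (Fin 2) (Fin 2) F) = c • (A : Matrix (Fin 2) (Fin 2) F) :=
  (Algebra.smul_def c A.1).symm

theorem lower_eq_zero (A : Tri F) : (A : Matrix (Fin 2) (Fin 2) F) 1 0 = 0 := A.2

theorem ext {A B : Tri F} (h₀₀ : A.1 0 0 = B.1 0 0) (h₀₁ : A.1 0 1 = B.1 0 1)
    (h₁₁ : A.1 1 1 = B.1 1 1) : A = B := by
  refine Subtype.ext (Matrix.ext fun i j => ?_)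
  fin_cases i <;> fin_cases j
  exacts [h₀₀, h₀₁, by simp [lower_eq_zero], h₁₁]

theorem commute_iff {A B : Tri F} :
    Commute A B ↔ (A.1 0 0 - A.1 1 1) * B.1 0 1 = (B.1 0 0 - B.1 1 1) * A.1 0 1 := by
  rw [commute_iff_eq, Subtype.ext_iff, Subring.coe_mul, Subring.coe_mul, ← Matrix.ext_iff]
  simp only [Fin.forall_fin_two, Matrix.mul_apply, Fin.sum_univ_two, lower_eq_zero, mul_zero,
    zero_mul, add_zero, zero_add, mul_comm (A.1 0 0), mul_comm (A.1 1 1), true_and, and_true]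
  constructor <;> intro h <;> linear_combination h

theorem eq_algebraMap_of_diagonal {A : Tri F} (h₀₁ : A.1 0 1 = 0) (h : A.1 0 0 = A.1 1 1) :
    A = algebraMap F (Tri F) (A.1 0 0) :=
  ext (by simp) (by simp [h₀₁]) (by simp [h])

theorem centralizer_subset_span {v : Tri F} (hv : v ∉ Set.center (Tri F)) :
    Set.centralizer {v} ⊆ Submodule.span F {1, v} := by
  intro w hw
  have hdb : v.1 0 0 - v.1 1 1 ≠ 0 ∨ v.1 0 1 ≠ 0 := by
    by_contra! h
    exact hv (eq_algebraMap_of_diagonal h.2 (sub_eq_zero.1 h.1) ▸ Set.algebraMap_mem_center _)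
  obtain ⟨t, hd, hb⟩ := exists_eq_mul_of_mul_eq_mul hdb (commute_iff.1 (hw v rfl))
  refine Submodule.mem_span_pair.2 ⟨w.1 0 0 - t * v.1 0 0, t, ext ?_ ?_ ?_⟩
  · simp
  · simpa using hb.symm
  · simp only [Subring.coe_add, coe_smul, OneMemClass.coe_one, Matrix.add_apply,
      Matrix.smul_apply, one_apply_eq, smul_eq_mul, mul_one]
    linear_combination hd

theorem exists_notMem_center : ∃ v : Tri F, v ∉ Set.center (Tri F) := by
  refine ⟨⟨!![0, 1; 0, 0], rfl⟩, fun h => ?_⟩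
  have := commute_iff.1 (h.comm ⟨!![1, 0; 0, 0], rfl⟩)
  simp at this

end Tri

/-- Theorem 2.9(ii): the clique number of the commuting graph of `Tri F` over
a finite field `F` of order `q` is `q^2 - q`. -/
theorem cliqueNum_commGraph_tri_field {F : Type*} [Field F] [Fintype F] (q : ℕ)
    (hq : Fintype.card F = q) :
    (commGraph (Tri F)).cliqueNum = q ^ 2 - q := by
  obtain ⟨v, hv⟩ := Tri.exists_notMem_center (F := F)
  rw [cliqueNum_commGraph_eq_of_centralizer_subset_span hv fun _ => Tri.centralizer_subset_span,
    hq, sq, Nat.mul_sub_one]
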